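/- Let S be the zero-union of finite semigroups S₁, …, Sₙ with at least two non-commutative factors. Then the commuting graph of S contains a left path if and only if there exists a non-commutative Sᵢ and distinct non-central x, y ∈ Sᵢ with x² = yx and y² = xy; in this case the knit degree of S is 1 or 2, and it equals 1 if and only if some G(Sᵢ) contains a left path of length 1. -/

import Mathlib

open SimpleGraph

/-- The center of a magma/semigroup: elements commuting with everything. -/
def sgCenter (S : Type*) [Mul S] : Set S := {x | ∀ y, x * y = y * x}

/-- The commuting graph of a semigroup: vertices are non-central elements,
distinct vertices adjacent iff they commute. -/
def commGraph (S : Type*) [Mul S] : SimpleGraph {x : S // x ∉ sgCenter S} where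
  Adj x y := x ≠ y ∧ (x : S) * y = (y : S) * x
  symm := ⟨fun x y ⟨h, h'⟩ => ⟨h.symm, h'.symm⟩⟩
  loopless := ⟨fun x ⟨h, _⟩ => h rfl⟩

/-- The extended commuting graph of a semigroup: vertices are all elements,
distinct vertices adjacent iff they commute. -/
def extCommGraph (S : Type*) [Mul S] : SimpleGraph S where
  Adj x y := x ≠ y ∧ x * y = y * x
  symm := ⟨fun x y ⟨h, h'⟩ => ⟨h.symm, h'.symm⟩⟩
  loopless := ⟨fun x ⟨h, _⟩ => h rfl⟩

/-- The graph join of two graphs on disjoint vertex sets. -/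
def graphJoin {V W : Type*} (G : SimpleGraph V) (H : SimpleGraph W) :
    SimpleGraph (V ⊕ W) where
  Adj x y := match x, y with
    | .inl a, .inl b => G.Adj a b
    | .inr a, .inr b => H.Adj a b
    | .inl _, .inr _ => True
    | .inr _, .inl _ => True
  symm := by constructor; rintro (a|a) (b|b) h <;> simp_all [SimpleGraph.Adj.symm]
  loopless := by constructor; rintro (a|a) h; exacts [G.loopless.irrefl a h, H.loopless.irrefl a h]

/-- The graph join of a family of graphs on disjoint vertex sets. -/
def graphJoinFam {ι : Type*} {V : ι → Type*} (G : ∀ i, SimpleGraph (V i)) :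
    SimpleGraph (Σ i, V i) where
  Adj x y := x.1 ≠ y.1 ∨ ∃ a b : V x.1, (G x.1).Adj a b ∧ x = ⟨x.1, a⟩ ∧ y = ⟨x.1, b⟩
  symm := by
    constructor
    rintro ⟨i, a⟩ ⟨j, b⟩ (h | ⟨a', b', hadj, h1, h2⟩)
    · exact Or.inl h.symm
    · cases h1; cases h2
      exact Or.inr ⟨b', a, hadj.symm, rfl, rfl⟩
  loopless := by
    constructor
    rintro ⟨i, a⟩ (h | ⟨a', b', hadj, h1, h2⟩)
    · exact h rfl
    · cases h1
      cases h2
      exact (G i).loopless.irrefl _ hadj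

/-- The strong product of two simple graphs. -/
def strongProd {V W : Type*} (G : SimpleGraph V) (H : SimpleGraph W) :
    SimpleGraph (V × W) where
  Adj x y := x ≠ y ∧ (x.1 = y.1 ∨ G.Adj x.1 y.1) ∧ (x.2 = y.2 ∨ H.Adj x.2 y.2)
  symm := ⟨fun x y ⟨h, h1, h2⟩ =>
    ⟨h.symm, h1.imp Eq.symm (fun h => G.symm.symm _ _ h), h2.imp Eq.symm (fun h => H.symm.symm _ _ h)⟩⟩
  loopless := ⟨fun x ⟨h, _⟩ => h rfl⟩

/-- The strong product of a family of simple graphs. -/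
def strongProdFam {ι : Type*} {V : ι → Type*} (G : ∀ i, SimpleGraph (V i)) :
    SimpleGraph (∀ i, V i) where
  Adj x y := x ≠ y ∧ ∀ i, x i = y i ∨ (G i).Adj (x i) (y i)
  symm := ⟨fun x y ⟨h, h'⟩ => ⟨h.symm, fun i => (h' i).imp Eq.symm (fun h => (G i).symm.symm _ _ h)⟩⟩
  loopless := ⟨fun x ⟨h, _⟩ => h rfl⟩

/-- `p` is a left path in the commuting graph of `S`. -/
def IsLeftPath {S : Type*} [Mul S] {u v : {x : S // x ∉ sgCenter S}}
    (p : (commGraph S).Walk u v) : Prop :=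
  p.IsPath ∧ u ≠ v ∧ ∀ w ∈ p.support, (u : S) * (w : S) = (v : S) * (w : S)

/-- The commuting graph of `S` contains a left path. -/
def HasLeftPath (S : Type*) [Mul S] : Prop :=
  ∃ (u v : {x : S // x ∉ sgCenter S}) (p : (commGraph S).Walk u v), IsLeftPath p

/-- The knit degree of `S`: the length of a shortest left path in its commuting graph. -/
noncomputable def knitDegree (S : Type*) [Mul S] : ℕ :=
  sInf {m | ∃ (u v : {x : S // x ∉ sgCenter S}) (p : (commGraph S).Walk u v),
    IsLeftPath p ∧ p.length = m}

/-- `p` is a *-left path in the extended commuting graph of `S`. -/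
def IsStarLeftPath {S : Type*} [Mul S] {u v : S}
    (p : (extCommGraph S).Walk u v) : Prop :=
  p.IsPath ∧ u ≠ v ∧ ∀ w ∈ p.support, u * w = v * w

/-- The extended commuting graph of `S` contains a *-left path. -/
def HasStarLeftPath (S : Type*) [Mul S] : Prop :=
  ∃ (u v : S) (p : (extCommGraph S).Walk u v), IsStarLeftPath p

/-- The *-knit degree of `S`. -/
noncomputable def starKnitDegree (S : Type*) [Mul S] : ℕ :=
  sInf {m | ∃ (u v : S) (p : (extCommGraph S).Walk u v), IsStarLeftPath p ∧ p.length = m}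

/-- The zero-union of a family of semigroups: their disjoint union plus a new zero. -/
def ZeroUnion {n : ℕ} (S : Fin n → Type*) : Type _ := Option (Σ i, S i)

instance {n : ℕ} (S : Fin n → Type*) [∀ i, Mul (S i)] : Mul (ZeroUnion S) where
  mul x y := match x, y with
    | some ⟨i, a⟩, some ⟨j, b⟩ =>
      if h : j = i then some ⟨i, a * (h ▸ b)⟩ else none
    | _, _ => none

/-!
The endpoints `x ≠ y` of a left path in the zero-union satisfy `x² = yx` and `y² = xy`; as `x²`
is non-zero, `y` lies in the factor of `x`, and the relations pull back to that factor.
Conversely, for such a pair in `Sᵢ` any non-central `z` of a second non-commutative factor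
annihilates both `x` and `y`, so `x — z — y` is a left path of length 2. A left path of length 1
is a single commuting left pair, which again lives in one factor.
-/

/-- The condition satisfied by the endpoints of every left path. -/
def IsLeftPair {M : Type*} [Mul M] (x y : M) : Prop :=
  x ∉ sgCenter M ∧ y ∉ sgCenter M ∧ x ≠ y ∧ x * x = y * x ∧ y * y = x * y

/-- `knitDegree M` is by definition `sInf {m | HasLeftPathOfLength M m}`. -/
def HasLeftPathOfLength (M : Type*) [Mul M] (m : ℕ) : Prop :=
  ∃ (u v : {x : M // x ∉ sgCenter M}) (p : (commGraph M).Walk u v), IsLeftPath p ∧ p.length = m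

section LeftPath

variable {M : Type*} [Mul M]

theorem exists_notMem_sgCenter_iff : (∃ x : M, x ∉ sgCenter M) ↔ ¬ ∀ x y : M, x * y = y * x := by
  simp [sgCenter]

theorem IsLeftPath.isLeftPair {u v : {x : M // x ∉ sgCenter M}} {p : (commGraph M).Walk u v}
    (hp : IsLeftPath p) : IsLeftPair (u : M) v :=
  ⟨u.2, v.2, fun h => hp.2.1 (Subtype.ext h), hp.2.2 u p.start_mem_support,
    (hp.2.2 v p.end_mem_support).symm⟩

theorem IsLeftPath.length_pos {u v : {x : M // x ∉ sgCenter M}} {p : (commGraph M).Walk u v}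
    (hp : IsLeftPath p) : 0 < p.length :=
  Nat.pos_of_ne_zero fun h => hp.2.1 (p.eq_of_length_eq_zero h)

theorem HasLeftPathOfLength.hasLeftPath {m : ℕ} (h : HasLeftPathOfLength M m) : HasLeftPath M :=
  let ⟨u, v, p, hp, _⟩ := h
  ⟨u, v, p, hp⟩

theorem hasLeftPathOfLength_one_iff :
    HasLeftPathOfLength M 1 ↔ ∃ x y : M, IsLeftPair x y ∧ x * y = y * x := by
  constructor
  · rintro ⟨u, v, p, hp, hlen⟩
    exact ⟨u, v, hp.isLeftPair, (p.adj_of_length_eq_one hlen).2⟩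
  · rintro ⟨x, y, ⟨hx, hy, hxy, hxx, hyy⟩, hcomm⟩
    have hne : (⟨x, hx⟩ : {x : M // x ∉ sgCenter M}) ≠ ⟨y, hy⟩ := fun h => hxy congr($h.1)
    have hadj : (commGraph M).Adj ⟨x, hx⟩ ⟨y, hy⟩ := ⟨hne, hcomm⟩
    refine ⟨_, _, hadj.toWalk, ⟨Adj.isPath_toWalk hadj, hne, ?_⟩, rfl⟩
    simp only [Adj.support_toWalk, List.mem_cons, List.not_mem_nil, or_false, forall_eq_or_imp,
      forall_eq]
    exact ⟨hxx, hyy.symm⟩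

theorem HasLeftPathOfLength.knitDegree_le {m : ℕ} (h : HasLeftPathOfLength M m) :
    knitDegree M ≤ m :=
  Nat.sInf_le h

theorem hasLeftPathOfLength_knitDegree (h : HasLeftPath M) :
    HasLeftPathOfLength M (knitDegree M) :=
  Nat.sInf_mem (s := {m | HasLeftPathOfLength M m}) <|
    let ⟨u, v, p, hp⟩ := h
    ⟨p.length, u, v, p, hp, rfl⟩

theorem knitDegree_pos (h : HasLeftPath M) : 0 < knitDegree M :=
  let ⟨_, _, _, hp, hlen⟩ := hasLeftPathOfLength_knitDegree h
  hlen ▸ hp.length_pos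

theorem knitDegree_eq_one_iff (h : HasLeftPath M) :
    knitDegree M = 1 ↔ HasLeftPathOfLength M 1 := by
  refine ⟨fun h1 => h1 ▸ hasLeftPathOfLength_knitDegree h, fun h1 => ?_⟩
  have := h1.knitDegree_le
  have := knitDegree_pos h
  omega

end LeftPath

namespace ZeroUnion

variable {n : ℕ} {S : Fin n → Type*}

instance : Zero (ZeroUnion S) := ⟨(none : Option (Σ i, S i))⟩

def of (i : Fin n) (a : S i) : ZeroUnion S := (some ⟨i, a⟩ : Option (Σ i, S i))

theorem eq_zero_or_exists_of (x : ZeroUnion S) : x = 0 ∨ ∃ i a, x = of i a := by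
  rcases (x : Option (Σ i, S i)) with _ | ⟨i, a⟩
  · exact Or.inl rfl
  · exact Or.inr ⟨i, a, rfl⟩

theorem of_injective (i : Fin n) : Function.Injective (of (S := S) i) := fun _ _ h =>
  eq_of_heq (Sigma.mk.inj_iff.1 (Option.some_injective _ h)).2

theorem of_ne_of {i j : Fin n} (hij : i ≠ j) (a : S i) (b : S j) : of i a ≠ of j b :=
  fun h => hij congr($(Option.some_injective _ h).1)

theorem of_ne_zero (i : Fin n) (a : S i) : of i a ≠ 0 := Option.some_ne_none _

variable [∀ i, Mul (S i)]

theorem of_mul_of (i : Fin n) (a b : S i) : of i a * of i b = of i (a * b) :=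
  dif_pos rfl

theorem of_mul_of_of_ne {i j : Fin n} (hij : i ≠ j) (a : S i) (b : S j) : of i a * of j b = 0 :=
  dif_neg hij.symm

protected theorem zero_mul (x : ZeroUnion S) : 0 * x = 0 := rfl

protected theorem mul_zero (x : ZeroUnion S) : x * 0 = 0 := by
  rcases eq_zero_or_exists_of x with rfl | ⟨i, a, rfl⟩ <;> rfl

theorem of_mul_of_eq_of_mul_of_iff {i : Fin n} {a b c d : S i} :
    of i a * of i b = of i c * of i d ↔ a * b = c * d := by
  rw [of_mul_of, of_mul_of, (of_injective i).eq_iff]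

theorem zero_mem_sgCenter : (0 : ZeroUnion S) ∈ sgCenter (ZeroUnion S) := fun y => by
  rw [ZeroUnion.zero_mul, ZeroUnion.mul_zero]

theorem of_mem_sgCenter_iff {i : Fin n} {a : S i} :
    of i a ∈ sgCenter (ZeroUnion S) ↔ a ∈ sgCenter (S i) := by
  refine ⟨fun h b => of_mul_of_eq_of_mul_of_iff.1 (h (of i b)), fun h y => ?_⟩
  rcases eq_zero_or_exists_of y with rfl | ⟨j, b, rfl⟩
  · rw [ZeroUnion.zero_mul, ZeroUnion.mul_zero]
  · rcases eq_or_ne i j with rfl | hij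
    · exact of_mul_of_eq_of_mul_of_iff.2 (h b)
    · rw [of_mul_of_of_ne hij, of_mul_of_of_ne hij.symm]

theorem isLeftPair_of_iff {i : Fin n} {a b : S i} :
    IsLeftPair (of i a) (of i b) ↔ IsLeftPair a b := by
  simp only [IsLeftPair, of_mem_sgCenter_iff, (of_injective i).ne_iff, of_mul_of_eq_of_mul_of_iff]

theorem exists_of_of_isLeftPair {x y : ZeroUnion S} (h : IsLeftPair x y) :
    ∃ i, ∃ a b : S i, x = of i a ∧ y = of i b := by
  obtain ⟨hx, hy, -, hxx, -⟩ := h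
  rcases eq_zero_or_exists_of x with rfl | ⟨i, a, rfl⟩
  · exact absurd zero_mem_sgCenter hx
  rcases eq_zero_or_exists_of y with rfl | ⟨j, b, rfl⟩
  · exact absurd zero_mem_sgCenter hy
  rcases eq_or_ne j i with rfl | hji
  · exact ⟨j, a, b, rfl, rfl⟩
  · rw [of_mul_of, of_mul_of_of_ne hji] at hxx
    exact absurd hxx (of_ne_zero i _)

theorem exists_isLeftPair_of_hasLeftPath (h : HasLeftPath (ZeroUnion S)) :
    ∃ i, ∃ a b : S i, IsLeftPair a b := by
  obtain ⟨u, v, p, hp⟩ := h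
  obtain ⟨i, a, b, hu, hv⟩ := exists_of_of_isLeftPair hp.isLeftPair
  exact ⟨i, a, b, isLeftPair_of_iff.1 (hu ▸ hv ▸ hp.isLeftPair)⟩

theorem hasLeftPathOfLength_one_iff :
    HasLeftPathOfLength (ZeroUnion S) 1 ↔ ∃ i, HasLeftPathOfLength (S i) 1 := by
  simp only [_root_.hasLeftPathOfLength_one_iff]
  constructor
  · rintro ⟨x, y, hxy, hcomm⟩
    obtain ⟨i, a, b, rfl, rfl⟩ := exists_of_of_isLeftPair hxy
    exact ⟨i, a, b, isLeftPair_of_iff.1 hxy, of_mul_of_eq_of_mul_of_iff.1 hcomm⟩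
  · rintro ⟨i, a, b, hab, hcomm⟩
    exact ⟨of i a, of i b, isLeftPair_of_iff.2 hab, of_mul_of_eq_of_mul_of_iff.2 hcomm⟩

theorem hasLeftPathOfLength_two {i j : Fin n} (hij : i ≠ j) {a b : S i} (hab : IsLeftPair a b)
    {c : S j} (hc : c ∉ sgCenter (S j)) : HasLeftPathOfLength (ZeroUnion S) 2 := by
  obtain ⟨ha, hb, hne, haa, hbb⟩ := isLeftPair_of_iff.2 hab
  let u : {x : ZeroUnion S // x ∉ sgCenter _} := ⟨of i a, ha⟩
  let v : {x : ZeroUnion S // x ∉ sgCenter _} := ⟨of i b, hb⟩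
  let w : {x : ZeroUnion S // x ∉ sgCenter _} := ⟨of j c, of_mem_sgCenter_iff.not.2 hc⟩
  have huv : u ≠ v := fun h => hne congr($h.1)
  have huw : u ≠ w := fun h => of_ne_of hij a c congr($h.1)
  have hwv : w ≠ v := fun h => of_ne_of hij.symm c b congr($h.1)
  have hac : of i a * of j c = 0 := of_mul_of_of_ne hij a c
  have hbc : of i b * of j c = 0 := of_mul_of_of_ne hij b c
  have huw' : (commGraph _).Adj u w := ⟨huw, hac.trans (of_mul_of_of_ne hij.symm c a).symm⟩
  have hwv' : (commGraph _).Adj w v := ⟨hwv, (of_mul_of_of_ne hij.symm c b).trans hbc.symm⟩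
  refine ⟨u, v, .cons huw' (.cons hwv' .nil), ⟨?_, huv, ?_⟩, rfl⟩
  · simp [Walk.cons_isPath_iff, huw, huv, hwv]
  · simp only [Walk.support_cons, Walk.support_nil, List.mem_cons, List.not_mem_nil, or_false,
      forall_eq_or_imp, forall_eq]
    exact ⟨haa, hac.trans hbc.symm, hbb.symm⟩

end ZeroUnion

theorem knitDegree_zeroUnion_general {n : ℕ} (S : Fin n → Type*)
    [∀ i, Semigroup (S i)]
    (NC : Finset (Fin n)) (hNC : ∀ i, i ∈ NC ↔ ¬ ∀ x y : S i, x * y = y * x)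
    (h2 : 2 ≤ NC.card) :
    (HasLeftPath (ZeroUnion S) ↔
      ∃ i ∈ NC, ∃ x y : S i, x ∉ sgCenter (S i) ∧ y ∉ sgCenter (S i) ∧ x ≠ y ∧
        x * x = y * x ∧ y * y = x * y) ∧
    (HasLeftPath (ZeroUnion S) →
      (knitDegree (ZeroUnion S) = 1 ∨ knitDegree (ZeroUnion S) = 2) ∧
      (knitDegree (ZeroUnion S) = 1 ↔
        ∃ (i : Fin n) (u v : {x : S i // x ∉ sgCenter (S i)})
          (p : (commGraph (S i)).Walk u v), IsLeftPath p ∧ p.length = 1)) := by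
  have hlength_two : ∀ i, ∀ a b : S i, IsLeftPair a b → HasLeftPathOfLength (ZeroUnion S) 2 := by
    intro i a b hab
    obtain ⟨j, hj, hji⟩ := NC.exists_mem_ne h2 i
    obtain ⟨c, hc⟩ := exists_notMem_sgCenter_iff.2 ((hNC j).1 hj)
    exact ZeroUnion.hasLeftPathOfLength_two hji.symm hab hc
  refine ⟨⟨fun h => ?_, fun ⟨i, _, a, b, hab⟩ => (hlength_two i a b hab).hasLeftPath⟩, fun h => ?_⟩
  · obtain ⟨i, a, b, hab⟩ := ZeroUnion.exists_isLeftPair_of_hasLeftPath h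
    exact ⟨i, (hNC i).2 (exists_notMem_sgCenter_iff.1 ⟨a, hab.1⟩), a, b, hab⟩
  refine ⟨?_, (knitDegree_eq_one_iff h).trans ZeroUnion.hasLeftPathOfLength_one_iff⟩
  obtain ⟨i, a, b, hab⟩ := ZeroUnion.exists_isLeftPair_of_hasLeftPath h
  have := (hlength_two i a b hab).knitDegree_le
  have := knitDegree_pos h
  omega

theorem knitDegree_zeroUnion {n : ℕ} (S : Fin n → Type*)
    [∀ i, Semigroup (S i)] [∀ i, Fintype (S i)] [∀ i, Nonempty (S i)]
    (NC : Finset (Fin n)) (hNC : ∀ i, i ∈ NC ↔ ¬ ∀ x y : S i, x * y = y * x)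
    (h2 : 2 ≤ NC.card) :
    (HasLeftPath (ZeroUnion S) ↔
      ∃ i ∈ NC, ∃ x y : S i, x ∉ sgCenter (S i) ∧ y ∉ sgCenter (S i) ∧ x ≠ y ∧
        x * x = y * x ∧ y * y = x * y) ∧
    (HasLeftPath (ZeroUnion S) →
      (knitDegree (ZeroUnion S) = 1 ∨ knitDegree (ZeroUnion S) = 2) ∧
      (knitDegree (ZeroUnion S) = 1 ↔
        ∃ (i : Fin n) (u v : {x : S i // x ∉ sgCenter (S i)})
          (p : (commGraph (S i)).Walk u v), IsLeftPath p ∧ p.length = 1)) :=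
  knitDegree_zeroUnion_general S NC hNC h2
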